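/- arXiv:1607.03212 — 2 statements merged into one kernel-verified Lean document; each statement's English description precedes it below -/
import Mathlib

section
/- Let X be a generalized partial metric space and φ a weight on X with tφ < ∞ satisfying: (a) inf over x with φ(x)<∞ of (φ(x)−X(x,x)) = 0, and (b) whenever φ(x_i) < X(x_i,x_i)+δ_i (i=1,2) there exist y and ε>0 with φ(y) < X(y,y)+ε and X(x_i,y)+ε < X(x_i,x_i)+δ_i. Then φ is forward Cauchy: there exists a forward Cauchy net {x_λ} with φ(x) = inf_λ sup_{σ≥λ} X(x,x_σ) for all x. Specifically, the set D = {(z,r) : φ(z) < X(z,z)+r} directed by (z,r) ⊑ (z',r') iff X(z,z')+r' ≤ X(z,z)+r yields such a net via projection to the first coordinate. -/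
open Filter Topology
open scoped ENNReal

/-- The directed set `D = {(z,r) : φ(z) < X(z,z) + r}`. -/
def D17 {X : Type*} (p : X → X → ℝ≥0∞) (φ : X → ℝ≥0∞) : Type _ :=
  {q : X × ℝ≥0∞ // φ q.1 < p q.1 q.1 + q.2}

/-- The order `(z,r) ⊑ (z',r')` iff `X(z,z') + r' ≤ X(z,z) + r`. -/
def R17 {X : Type*} (p : X → X → ℝ≥0∞) (d e : X × ℝ≥0∞) : Prop :=
  p d.1 e.1 + e.2 ≤ p d.1 d.1 + d.2

/-- The filter of sections of `(D,⊑)` (the "atTop" filter of the directed set `D`). -/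
def F17 {X : Type*} (p : X → X → ℝ≥0∞) (φ : X → ℝ≥0∞) : Filter (D17 p φ) :=
  ⨅ d : D17 p φ, 𝓟 {e : D17 p φ | R17 p d.1 e.1}

/-! The order `⊑` is transitive by the triangle inequality, and along it both the radius `r`
and the "ball value" `X(z,z) + r` decrease. Condition (a) provides elements of `D` of
arbitrarily small radius, and then everything above them has radius at most that. Hence,
eventually in `D`, `X(z,z) + r` is close to its infimum `L` while `r` is small, which squeezes
`X(z,z')` for `(z,r) ⊑ (z',r')` between `L - ε` and `L + ε`. For generation, the weight
inequality gives `φ(u) ≤ X(u,z) + r` for every `(z,r) ∈ D`, while above the element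
`(u, φ(u) - X(u,u) + ε)` of `D` the function `X(u,-)` is bounded by `φ(u) + ε`. -/

section

variable {X : Type*} {p : X → X → ℝ≥0∞} {φ : X → ℝ≥0∞}

lemma R17.trans (h_self_le_right : ∀ x y, p y y ≤ p x y)
    (h_triangle : ∀ x y z, p x z ≤ p y z + (p x y - p y y)) {d e g : X × ℝ≥0∞}
    (hde : R17 p d e) (heg : R17 p e g) : R17 p d g :=
  calc p d.1 g.1 + g.2 ≤ p e.1 g.1 + (p d.1 e.1 - p e.1 e.1) + g.2 := by
        gcongr; exact h_triangle _ _ _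
    _ = (p d.1 e.1 - p e.1 e.1) + (p e.1 g.1 + g.2) := by ring
    _ ≤ (p d.1 e.1 - p e.1 e.1) + (p e.1 e.1 + e.2) := add_le_add_right heg _
    _ = p d.1 e.1 + e.2 := by
        rw [← add_assoc, tsub_add_cancel_of_le (h_self_le_right _ _)]
    _ ≤ p d.1 d.1 + d.2 := hde

lemma D17.directed
    (hb : ∀ (x₁ x₂ : X) (δ₁ δ₂ : ℝ≥0∞), φ x₁ < p x₁ x₁ + δ₁ → φ x₂ < p x₂ x₂ + δ₂ →
      ∃ (y : X) (ε : ℝ≥0∞), 0 < ε ∧ φ y < p y y + ε ∧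
        p x₁ y + ε < p x₁ x₁ + δ₁ ∧ p x₂ y + ε < p x₂ x₂ + δ₂)
    (d e : D17 p φ) : ∃ g : D17 p φ, R17 p d.1 g.1 ∧ R17 p e.1 g.1 := by
  obtain ⟨y, ε, -, hy, hd, he⟩ := hb d.1.1 e.1.1 d.1.2 e.1.2 d.2 e.2
  exact ⟨⟨(y, ε), hy⟩, hd.le, he.le⟩

lemma R17.self_add_le (h_self_le_right : ∀ x y, p y y ≤ p x y) {d e : X × ℝ≥0∞}
    (h : R17 p d e) : p e.1 e.1 + e.2 ≤ p d.1 d.1 + d.2 :=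
  le_trans (by gcongr; exact h_self_le_right _ _) h

lemma R17.snd_le (h_self_le_left : ∀ x y, p x x ≤ p x y) {d e : X × ℝ≥0∞}
    (hd : p d.1 d.1 ≠ ⊤) (h : R17 p d e) : e.2 ≤ d.2 :=
  (ENNReal.add_le_add_iff_left hd).mp (le_trans (by gcongr; exact h_self_le_left _ _) h)

lemma D17.le_add_snd (hw : ∀ x y, φ x ≤ p x y + (φ y - p y y)) (u : X) (g : D17 p φ) :
    φ u ≤ p u g.1.1 + g.1.2 :=
  (hw u g.1.1).trans (by gcongr; exact tsub_le_iff_left.mpr g.2.le)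

lemma D17.exists_snd_eq (hpφ : ∀ x, p x x ≤ φ x)
    (ha : (⨅ x : {x : X // φ x < ⊤}, (φ x.1 - p x.1 x.1)) = 0) {η : ℝ≥0∞} (hη : 0 < η) :
    ∃ d : D17 p φ, d.1.2 = η ∧ p d.1.1 d.1.1 ≠ ⊤ := by
  obtain ⟨⟨x, hx⟩, hxη⟩ := iInf_lt_iff.mp (ha ▸ hη : (⨅ x : {x : X // φ x < ⊤}, _) < η)
  have hpx : p x x ≠ ⊤ := ((hpφ x).trans_lt hx).ne
  refine ⟨⟨(x, η), ?_⟩, rfl, hpx⟩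
  calc φ x ≤ (φ x - p x x) + p x x := le_tsub_add
    _ < η + p x x := (ENNReal.add_lt_add_iff_right hpx).mpr hxη
    _ = p x x + η := add_comm _ _

lemma F17.eventually_of_R17 {P : D17 p φ → Prop} (d : D17 p φ)
    (h : ∀ e : D17 p φ, R17 p d.1 e.1 → P e) : ∀ᶠ e in F17 p φ, P e :=
  mem_iInf_of_mem d (mem_principal.mpr h)

lemma F17.eventually_snd_le (h_self_le_left : ∀ x y, p x x ≤ p x y) (hpφ : ∀ x, p x x ≤ φ x)
    (ha : (⨅ x : {x : X // φ x < ⊤}, (φ x.1 - p x.1 x.1)) = 0) {η : ℝ≥0∞} (hη : 0 < η) :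
    ∀ᶠ e in F17 p φ, e.1.2 ≤ η := by
  obtain ⟨d, rfl, hd⟩ := D17.exists_snd_eq hpφ ha hη
  exact F17.eventually_of_R17 d fun e he => R17.snd_le h_self_le_left hd he

lemma F17.eventually_self_add_snd_le (h_self_le_right : ∀ x y, p y y ≤ p x y) {c : ℝ≥0∞}
    (hc : (⨅ d : D17 p φ, p d.1.1 d.1.1 + d.1.2) < c) :
    ∀ᶠ e in F17 p φ, p e.1.1 e.1.1 + e.1.2 ≤ c := by
  obtain ⟨d, hd⟩ := iInf_lt_iff.mp hc
  exact F17.eventually_of_R17 d fun e he => (R17.self_add_le h_self_le_right he).trans hd.le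

lemma F17.tendsto_p (h_self_le_left : ∀ x y, p x x ≤ p x y)
    (h_self_le_right : ∀ x y, p y y ≤ p x y) (hpφ : ∀ x, p x x ≤ φ x)
    (ha : (⨅ x : {x : X // φ x < ⊤}, (φ x.1 - p x.1 x.1)) = 0) :
    Tendsto (fun q : D17 p φ × D17 p φ => p q.1.1.1 q.2.1.1)
      (((F17 p φ) ×ˢ (F17 p φ)) ⊓ 𝓟 {q : D17 p φ × D17 p φ | R17 p q.1.1 q.2.1})
      (𝓝 (⨅ d : D17 p φ, p d.1.1 d.1.1 + d.1.2)) := by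
  set L := ⨅ d : D17 p φ, p d.1.1 d.1.1 + d.1.2
  have hL : L ≠ ⊤ := by
    obtain ⟨d, hd1, hd⟩ := D17.exists_snd_eq hpφ ha one_pos
    exact ne_top_of_le_ne_top (by rw [hd1]; exact ENNReal.add_ne_top.mpr ⟨hd, ENNReal.one_ne_top⟩)
      (iInf_le _ d)
  rw [ENNReal.tendsto_nhds hL]
  intro ε hε
  have hval := F17.eventually_self_add_snd_le h_self_le_right (ENNReal.lt_add_right hL hε.ne')
  have hsnd := F17.eventually_snd_le h_self_le_left hpφ ha hε
  rw [eventually_inf_principal]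
  filter_upwards [hval.prod_mk hsnd] with ⟨d, e⟩ ⟨hd, he⟩ (hde : R17 p d.1 e.1)
  constructor
  · refine tsub_le_iff_right.mpr ?_
    calc L ≤ p e.1.1 e.1.1 + e.1.2 := iInf_le _ e
      _ ≤ p d.1.1 e.1.1 + ε := by gcongr; exact h_self_le_right _ _
  · calc p d.1.1 e.1.1 ≤ p d.1.1 e.1.1 + e.1.2 := le_self_add
      _ ≤ p d.1.1 d.1.1 + d.1.2 := hde
      _ ≤ L + ε := hd

lemma D17.eq_iInf_iSup (h_self_le_left : ∀ x y, p x x ≤ p x y) (hpφ : ∀ x, p x x ≤ φ x)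
    (hw : ∀ x y, φ x ≤ p x y + (φ y - p y y))
    (ha : (⨅ x : {x : X // φ x < ⊤}, (φ x.1 - p x.1 x.1)) = 0)
    (hb : ∀ (x₁ x₂ : X) (δ₁ δ₂ : ℝ≥0∞), φ x₁ < p x₁ x₁ + δ₁ → φ x₂ < p x₂ x₂ + δ₂ →
      ∃ (y : X) (ε : ℝ≥0∞), 0 < ε ∧ φ y < p y y + ε ∧
        p x₁ y + ε < p x₁ x₁ + δ₁ ∧ p x₂ y + ε < p x₂ x₂ + δ₂) (u : X) :
    φ u = ⨅ d : D17 p φ, ⨆ e : {e : D17 p φ // R17 p d.1 e.1}, p u e.1.1.1 := by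
  apply le_antisymm
  · refine le_iInf fun d => ENNReal.le_of_forall_pos_le_add fun ε hε _ => ?_
    obtain ⟨d₀, hd₀ε, hd₀⟩ := D17.exists_snd_eq hpφ ha (ENNReal.coe_pos.mpr hε)
    obtain ⟨g, hd₀g, hdg⟩ := D17.directed hb d₀ d
    calc φ u ≤ p u g.1.1 + g.1.2 := D17.le_add_snd hw u g
      _ ≤ (⨆ e : {e : D17 p φ // R17 p d.1 e.1}, p u e.1.1.1) + ε := by
        gcongr
        · exact le_iSup (fun e : {e : D17 p φ // R17 p d.1 e.1} => p u e.1.1.1) ⟨g, hdg⟩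
        · exact hd₀ε ▸ R17.snd_le h_self_le_left hd₀ hd₀g
  · refine ENNReal.le_of_forall_pos_le_add fun ε hε hu => ?_
    have hball : p u u + ((φ u - p u u) + ε) = φ u + ε := by
      rw [← add_assoc, add_tsub_cancel_of_le (hpφ u)]
    let d : D17 p φ := ⟨(u, (φ u - p u u) + ε),
      hball ▸ ENNReal.lt_add_right hu.ne (ENNReal.coe_pos.mpr hε).ne'⟩
    refine (iInf_le _ d).trans (iSup_le fun e => ?_)
    calc p u e.1.1.1 ≤ p u e.1.1.1 + e.1.1.2 := le_self_add
      _ ≤ p u u + ((φ u - p u u) + ε) := e.2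
      _ = φ u + ε := hball

end

theorem stmt17_general {X : Type*} (p : X → X → ℝ≥0∞)
    (h1 : ∀ x y, p x x ≤ p x y) (h1' : ∀ x y, p y y ≤ p x y)
    (h2 : ∀ x y z, p x z ≤ p y z + (p x y - p y y))
    (tφ : ℝ≥0∞) (φ : X → ℝ≥0∞)
    (hw1 : ∀ x y, φ x ≤ p x y + (φ y - p y y))
    (hw2 : ∀ x, max (p x x) tφ ≤ φ x)
    (ha : (⨅ x : {x : X // φ x < ⊤}, (φ x.1 - p x.1 x.1)) = 0)
    (hb : ∀ (x₁ x₂ : X) (δ₁ δ₂ : ℝ≥0∞), φ x₁ < p x₁ x₁ + δ₁ → φ x₂ < p x₂ x₂ + δ₂ →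
      ∃ (y : X) (ε : ℝ≥0∞), 0 < ε ∧ φ y < p y y + ε ∧
        p x₁ y + ε < p x₁ x₁ + δ₁ ∧ p x₂ y + ε < p x₂ x₂ + δ₂) :
    -- `(D,⊑)` is a directed preorder
    (∀ d : D17 p φ, R17 p d.1 d.1) ∧
    (∀ d e g : D17 p φ, R17 p d.1 e.1 → R17 p e.1 g.1 → R17 p d.1 g.1) ∧
    (∀ d e : D17 p φ, ∃ g : D17 p φ, R17 p d.1 g.1 ∧ R17 p e.1 g.1) ∧
    -- the net is forward Cauchy: the doubly-indexed net over comparable pairs converges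
    (∃ L : ℝ≥0∞, Tendsto (fun q : D17 p φ × D17 p φ => p q.1.1.1 q.2.1.1)
      (((F17 p φ) ×ˢ (F17 p φ)) ⊓ 𝓟 {q : D17 p φ × D17 p φ | R17 p q.1.1 q.2.1}) (𝓝 L)) ∧
    -- it generates φ: φ = inf_λ sup_{σ ⊒ λ} X(−, x_σ)
    (∀ u : X, φ u = ⨅ d : D17 p φ, ⨆ e : {e : D17 p φ // R17 p d.1 e.1}, p u e.1.1.1) := by
  have hpφ : ∀ x, p x x ≤ φ x := fun x => (le_max_left _ _).trans (hw2 x)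
  exact ⟨fun _ => le_rfl, fun _ _ _ => R17.trans h1' h2, D17.directed hb,
    ⟨_, F17.tendsto_p h1 h1' hpφ ha⟩, D17.eq_iInf_iSup h1 hpφ hw1 ha hb⟩

/-- a weight of finite type satisfying (a) and (b) is forward Cauchy:
the net `D ∋ (z,r) ↦ z` (with `D` as above) is forward Cauchy and generates `φ`. -/
theorem stmt17 {X : Type*} (p : X → X → ℝ≥0∞)
    (h1 : ∀ x y, p x x ≤ p x y) (h1' : ∀ x y, p y y ≤ p x y)
    (h2 : ∀ x y z, p x z ≤ p y z + (p x y - p y y))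
    (tφ : ℝ≥0∞) (htφ : tφ < ⊤) (φ : X → ℝ≥0∞)
    (hw1 : ∀ x y, φ x ≤ p x y + (φ y - p y y))
    (hw2 : ∀ x, max (p x x) tφ ≤ φ x)
    (ha : (⨅ x : {x : X // φ x < ⊤}, (φ x.1 - p x.1 x.1)) = 0)
    (hb : ∀ (x₁ x₂ : X) (δ₁ δ₂ : ℝ≥0∞), φ x₁ < p x₁ x₁ + δ₁ → φ x₂ < p x₂ x₂ + δ₂ →
      ∃ (y : X) (ε : ℝ≥0∞), 0 < ε ∧ φ y < p y y + ε ∧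
        p x₁ y + ε < p x₁ x₁ + δ₁ ∧ p x₂ y + ε < p x₂ x₂ + δ₂) :
    -- `(D,⊑)` is a directed preorder
    (∀ d : D17 p φ, R17 p d.1 d.1) ∧
    (∀ d e g : D17 p φ, R17 p d.1 e.1 → R17 p e.1 g.1 → R17 p d.1 g.1) ∧
    (∀ d e : D17 p φ, ∃ g : D17 p φ, R17 p d.1 g.1 ∧ R17 p e.1 g.1) ∧
    -- the net is forward Cauchy: the doubly-indexed net over comparable pairs converges
    (∃ L : ℝ≥0∞, Tendsto (fun q : D17 p φ × D17 p φ => p q.1.1.1 q.2.1.1)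
      (((F17 p φ) ×ˢ (F17 p φ)) ⊓ 𝓟 {q : D17 p φ × D17 p φ | R17 p q.1.1 q.2.1}) (𝓝 L)) ∧
    -- it generates φ: φ = inf_λ sup_{σ ⊒ λ} X(−, x_σ)
    (∀ u : X, φ u = ⨅ d : D17 p φ, ⨆ e : {e : D17 p φ // R17 p d.1 e.1}, p u e.1.1.1) :=
  stmt17_general p h1 h1' h2 tφ φ hw1 hw2 ha hb
end

section
/- Let Q = ([0,1],&,1) with & a continuous t-norm having a non-trivial idempotent element a ∈ (0,1). Then the flat weight φ on the Q-category A = ([0,1],→) (where A(x,y) = x→y is the residuation) defined by φ(0) = 1 and φ(x) = a for x ∈ (0,1] is not forward Cauchy, i.e., there is no net {x_λ} with lim_{ν≥μ}(x_μ → x_ν) = 1 and φ = ⋁_λ ⋀_{σ≥λ} ((−) → x_σ). -/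
noncomputable def tres (f : ℝ → ℝ → ℝ) (x y : ℝ) : ℝ :=
  sSup {z | z ∈ Set.Icc (0:ℝ) 1 ∧ f x z ≤ y}

def IsContTNorm (f : ℝ → ℝ → ℝ) : Prop :=
  (∀ a ∈ Set.Icc (0:ℝ) 1, ∀ b ∈ Set.Icc (0:ℝ) 1, f a b ∈ Set.Icc (0:ℝ) 1) ∧
  ContinuousOn (fun p : ℝ × ℝ => f p.1 p.2) (Set.Icc 0 1 ×ˢ Set.Icc 0 1) ∧
  (∀ a ∈ Set.Icc (0:ℝ) 1, ∀ b ∈ Set.Icc (0:ℝ) 1, f a b = f b a) ∧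
  (∀ a ∈ Set.Icc (0:ℝ) 1, ∀ b ∈ Set.Icc (0:ℝ) 1, ∀ c ∈ Set.Icc (0:ℝ) 1,
    f (f a b) c = f a (f b c)) ∧
  (∀ a ∈ Set.Icc (0:ℝ) 1, ∀ b ∈ Set.Icc (0:ℝ) 1, ∀ c ∈ Set.Icc (0:ℝ) 1,
    a ≤ b → f a c ≤ f b c) ∧
  (∀ a ∈ Set.Icc (0:ℝ) 1, f a 1 = a)

/-!
Since `a` is idempotent, `a & x = min a x`, so `a < x → y` forces `min a x ≤ y`. Forward
Cauchyness makes `x_μ → x_ν > a` for all `ν ≥ μ` beyond some `λ₀`, hence `x_σ ≥ min a x_μ`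
for `σ ≥ μ`. If some such `x_μ` were positive, the generated weight would take the value `1`
at `t = min a x_μ > 0`, where `φ(t) = a < 1`. So the net is eventually `0`, and then the
generated weight at `a` is at most `a → 0 = 0`, whereas `φ(a) = a > 0`.
-/

open Set

variable {f : ℝ → ℝ → ℝ}

namespace IsContTNorm

lemma comm (ht : IsContTNorm f) {x y : ℝ} (hx : x ∈ Icc (0:ℝ) 1) (hy : y ∈ Icc (0:ℝ) 1) :
    f x y = f y x :=
  ht.2.2.1 x hx y hy

lemma assoc (ht : IsContTNorm f) {x y z : ℝ} (hx : x ∈ Icc (0:ℝ) 1) (hy : y ∈ Icc (0:ℝ) 1)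
    (hz : z ∈ Icc (0:ℝ) 1) : f (f x y) z = f x (f y z) :=
  ht.2.2.2.1 x hx y hy z hz

lemma map_one_right (ht : IsContTNorm f) {x : ℝ} (hx : x ∈ Icc (0:ℝ) 1) : f x 1 = x :=
  ht.2.2.2.2.2 x hx

lemma map_zero_right (ht : IsContTNorm f) {x : ℝ} (hx : x ∈ Icc (0:ℝ) 1) : f x 0 = 0 := by
  obtain ⟨hmem, -, hcomm, -, hmono, hunit⟩ := ht
  have h0 : (0:ℝ) ∈ Icc (0:ℝ) 1 := left_mem_Icc.2 zero_le_one
  have h1 : (1:ℝ) ∈ Icc (0:ℝ) 1 := right_mem_Icc.2 zero_le_one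
  refine le_antisymm ?_ (hmem x hx 0 h0).1
  calc f x 0 ≤ f 1 0 := hmono x hx 1 h1 0 h0 hx.2
    _ = f 0 1 := hcomm 1 h1 0 h0
    _ = 0 := hunit 0 h0

lemma mono_right (ht : IsContTNorm f) {x y z : ℝ} (hx : x ∈ Icc (0:ℝ) 1)
    (hy : y ∈ Icc (0:ℝ) 1) (hz : z ∈ Icc (0:ℝ) 1) (hyz : y ≤ z) : f x y ≤ f x z := by
  rw [ht.comm hx hy, ht.comm hx hz]
  exact ht.2.2.2.2.1 y hy z hz x hx hyz

lemma continuousOn_right (ht : IsContTNorm f) {x : ℝ} (hx : x ∈ Icc (0:ℝ) 1) :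
    ContinuousOn (f x) (Icc 0 1) :=
  ht.2.1.comp (continuous_const.prodMk continuous_id).continuousOn
    fun _ hy => mk_mem_prod hx hy

lemma apply_eq_min_of_idempotent (ht : IsContTNorm f) {a : ℝ} (ha : a ∈ Icc (0:ℝ) 1)
    (hid : f a a = a) {x : ℝ} (hx : x ∈ Icc (0:ℝ) 1) : f a x = min a x := by
  rcases le_total a x with hax | hxa
  · rw [min_eq_left hax]
    refine le_antisymm ?_ ?_
    · simpa only [ht.map_one_right ha] using ht.mono_right ha hx (right_mem_Icc.2 zero_le_one) hx.2
    · simpa only [hid] using ht.mono_right ha ha hx hax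
  · -- `x = a & t` for some `t` by the intermediate value theorem, and `a & (a & t) = a & t`.
    rw [min_eq_right hxa]
    have hx' : x ∈ Icc (f a 0) (f a 1) := by
      rw [ht.map_zero_right ha, ht.map_one_right ha]
      exact ⟨hx.1, hxa⟩
    obtain ⟨t, ht01, rfl⟩ := intermediate_value_Icc zero_le_one (ht.continuousOn_right ha) hx'
    rw [← ht.assoc ha ha ht01, hid]

end IsContTNorm

lemma tres_nonneg (x y : ℝ) : 0 ≤ tres f x y :=
  Real.sSup_nonneg fun _ hz => hz.1.1

lemma tres_le_one (x y : ℝ) : tres f x y ≤ 1 :=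
  Real.sSup_le (fun _ hz => hz.1.2) zero_le_one

lemma bddBelow_range_tres {ι : Type*} (x y : ι → ℝ) :
    BddBelow (range fun i => tres f (x i) (y i)) :=
  ⟨0, forall_mem_range.2 fun _ => tres_nonneg _ _⟩

lemma tres_eq_one_of_le (ht : IsContTNorm f) {x y : ℝ} (hx : x ∈ Icc (0:ℝ) 1) (hxy : x ≤ y) :
    tres f x y = 1 :=
  le_antisymm (tres_le_one x y) <| le_csSup ⟨1, fun _ hz => hz.1.2⟩
    ⟨right_mem_Icc.2 zero_le_one, (ht.map_one_right hx).trans_le hxy⟩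

lemma IsContTNorm.apply_le_of_lt_tres (ht : IsContTNorm f) {x y c : ℝ}
    (hx : x ∈ Icc (0:ℝ) 1) (hc : c ∈ Icc (0:ℝ) 1) (h : c < tres f x y) : f x c ≤ y := by
  rcases eq_empty_or_nonempty {z | z ∈ Icc (0:ℝ) 1 ∧ f x z ≤ y} with hS | hS
  · rw [tres, hS, Real.sSup_empty] at h
    exact absurd hc.1 h.not_ge
  · obtain ⟨z, hz, hcz⟩ := exists_lt_of_lt_csSup hS h
    exact (ht.mono_right hx hc hz.1 hcz.le).trans hz.2

lemma IsContTNorm.min_le_of_idempotent_lt_tres (ht : IsContTNorm f) {a x y : ℝ}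
    (ha : a ∈ Icc (0:ℝ) 1) (hid : f a a = a) (hx : x ∈ Icc (0:ℝ) 1) (h : a < tres f x y) :
    min a x ≤ y := by
  rw [← ht.apply_eq_min_of_idempotent ha hid hx, ht.comm ha hx]
  exact ht.apply_le_of_lt_tres hx ha h

lemma IsContTNorm.tres_eq_zero_of_idempotent (ht : IsContTNorm f) {a : ℝ}
    (ha : a ∈ Ioc (0:ℝ) 1) (hid : f a a = a) : tres f a 0 = 0 := by
  refine le_antisymm (Real.sSup_le (fun z ⟨hz, hfz⟩ => ?_) le_rfl) (tres_nonneg a 0)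
  rw [ht.apply_eq_min_of_idempotent (Ioc_subset_Icc_self ha) hid hz] at hfz
  exact (min_le_iff.1 hfz).resolve_left ha.1.not_ge

section Nets

variable {Λ ι : Type*} {le : Λ → Λ → Prop}

lemma exists_forall_lt_of_lt_iSup_iInf [Nonempty Λ] {P : Λ → ι → Prop} {g : ι → ℝ}
    (hg : BddBelow (range g)) {b : ℝ} (h : b < ⨆ l, ⨅ i : {i // P l i}, g i) :
    ∃ l, ∀ i, P l i → b < g i := by
  obtain ⟨l, hl⟩ := exists_lt_of_lt_ciSup h
  exact ⟨l, fun i hi => hl.trans_le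
    (ciInf_le (f := fun j : {i // P l i} => g j) (hg.mono (range_comp_subset_range _ g)) ⟨i, hi⟩)⟩

lemma iSup_iInf_le_of_eventually_le [Nonempty Λ] (hdir : ∀ i j, ∃ k, le i k ∧ le j k)
    {g : Λ → ℝ} (hg : BddBelow (range g)) {l₀ : Λ} {c : ℝ} (h : ∀ σ, le l₀ σ → g σ ≤ c) :
    (⨆ l, ⨅ σ : {σ // le l σ}, g σ) ≤ c := by
  refine ciSup_le fun l => ?_
  obtain ⟨k, hlk, hl₀k⟩ := hdir l l₀
  exact (ciInf_le (f := fun σ : {σ // le l σ} => g σ) (hg.mono (range_comp_subset_range _ g))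
    ⟨k, hlk⟩).trans (h k hl₀k)

variable (hrefl : ∀ l, le l l) {X : Λ → ℝ}
include hrefl

lemma one_le_iSup_iInf_tres (ht : IsContTNorm f) {u : ℝ} (hu : u ∈ Icc (0:ℝ) 1) {μ : Λ}
    (h : ∀ σ, le μ σ → u ≤ X σ) : 1 ≤ ⨆ l, ⨅ σ : {σ // le l σ}, tres f u (X σ) := by
  have : Nonempty {σ // le μ σ} := ⟨⟨μ, hrefl μ⟩⟩
  have hbdd : BddAbove (range fun l => ⨅ σ : {σ // le l σ}, tres f u (X σ)) :=
    ⟨1, forall_mem_range.2 fun l => (ciInf_le (f := fun σ : {σ // le l σ} => tres f u (X σ))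
      (bddBelow_range_tres _ _) ⟨l, hrefl l⟩).trans (tres_le_one _ _)⟩
  calc (1:ℝ) ≤ ⨅ σ : {σ // le μ σ}, tres f u (X σ) :=
        le_ciInf fun σ => (tres_eq_one_of_le ht hu (h σ σ.2)).ge
    _ ≤ _ := le_ciSup hbdd μ

lemma eq_zero_of_forall_idempotent_lt_tres (ht : IsContTNorm f) {a : ℝ} (ha : a ∈ Ioo (0:ℝ) 1)
    (hid : f a a = a) (hX : ∀ l, X l ∈ Icc (0:ℝ) 1)
    (hφ : ∀ u ∈ Ioc (0:ℝ) 1, (⨆ l, ⨅ σ : {σ // le l σ}, tres f u (X σ)) = a) {μ : Λ}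
    (hμ : ∀ σ, le μ σ → a < tres f (X μ) (X σ)) : X μ = 0 := by
  by_contra hne
  have ht_pos : 0 < min a (X μ) := lt_min ha.1 ((hX μ).1.lt_of_ne' hne)
  have ht_mem : min a (X μ) ∈ Ioc (0:ℝ) 1 := ⟨ht_pos, (min_le_left _ _).trans ha.2.le⟩
  have := one_le_iSup_iInf_tres hrefl ht (Ioc_subset_Icc_self ht_mem) fun σ hσ =>
    ht.min_le_of_idempotent_lt_tres (Ioo_subset_Icc_self ha) hid (hX μ) (hμ σ hσ)
  rw [hφ _ ht_mem] at this
  exact ha.2.not_ge this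

end Nets

/-- if `a ∈ (0,1)` is a non-trivial idempotent of the continuous t-norm
`f`, then the flat weight `φ` on the Q-category `([0,1], →)` given by `φ(0) = 1` and
`φ(u) = a` for `u ∈ (0,1]` is not forward Cauchy: there is no forward Cauchy net
`{x_λ}` (i.e. with `⋁_λ ⋀_{ν ≥ μ ≥ λ} (x_μ → x_ν) = 1`) generating `φ`. -/
theorem stmt19 (f : ℝ → ℝ → ℝ) (ht : IsContTNorm f)
    (a : ℝ) (ha : a ∈ Set.Ioo (0:ℝ) 1) (hid : f a a = a) :
    ¬ ∃ (Λ : Type) (le : Λ → Λ → Prop),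
        (∀ l, le l l) ∧ (∀ i j k, le i j → le j k → le i k) ∧
        (∀ i j, ∃ k, le i k ∧ le j k) ∧ Nonempty Λ ∧
        ∃ x : Λ → {u : ℝ // u ∈ Set.Icc (0:ℝ) 1},
          -- forward Cauchy: ⋁_λ ⋀_{ν ≥ μ ≥ λ} A(x_μ, x_ν) = 1
          ((⨆ l : Λ, ⨅ q : {q : Λ × Λ // le l q.1 ∧ le q.1 q.2},
              tres f (x q.1.1).1 (x q.1.2).1) = 1) ∧
          -- φ = ⋁_λ ⋀_{σ ≥ λ} ((−) → x_σ)
          (∀ u : {u : ℝ // u ∈ Set.Icc (0:ℝ) 1},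
            (if u.1 = 0 then (1:ℝ) else a) =
              ⨆ l : Λ, ⨅ σ : {σ : Λ // le l σ}, tres f u.1 (x σ.1).1) := by
  rintro ⟨Λ, le, hrefl, -, hdir, hne, x, hCauchy, hgen⟩
  have hφ : ∀ u ∈ Ioc (0:ℝ) 1, (⨆ l, ⨅ σ : {σ // le l σ}, tres f u (x σ.1).1) = a :=
    fun u hu => by simpa only [hu.1.ne', if_false] using (hgen ⟨u, Ioc_subset_Icc_self hu⟩).symm
  obtain ⟨l₀, hl₀⟩ := exists_forall_lt_of_lt_iSup_iInf
    (bddBelow_range_tres (fun q : Λ × Λ => (x q.1).1) fun q => (x q.2).1) (hCauchy ▸ ha.2)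
  have hzero : ∀ μ, le l₀ μ → (x μ).1 = 0 := fun μ hμ =>
    eq_zero_of_forall_idempotent_lt_tres hrefl ht ha hid (fun l => (x l).2) hφ
      fun σ hσ => hl₀ (μ, σ) ⟨hμ, hσ⟩
  have hle : (⨆ l, ⨅ σ : {σ // le l σ}, tres f a (x σ.1).1) ≤ 0 :=
    iSup_iInf_le_of_eventually_le hdir (bddBelow_range_tres (fun _ => a) fun σ => (x σ).1)
      fun σ hσ => by rw [hzero σ hσ, ht.tres_eq_zero_of_idempotent (Ioo_subset_Ioc_self ha) hid]
  rw [hφ a (Ioo_subset_Ioc_self ha)] at hle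
  exact ha.1.not_ge hle
end
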